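/- The Bernoulli polynomial of higher order B_n(x_1,…,x_m), defined by ∏_{i=1}^m (x_i t)/(e^{x_i t}-1) = Σ_{n≥0} B_n(x^m) t^n/n!, equals the complete Bell polynomial 𝔹_n(b_1, b_2, …) evaluated at b_r = (-1)^{r-1} B_r p_r(x^m)/r, where p_r(x^m) = Σ_{i=1}^m x_i^r and B_r are Bernoulli numbers. -/

import Mathlib

open scoped BigOperators

/-- Formal exponential of a power series with zero constant term. -/
noncomputable def expPS {R : Type*} [CommRing R] [Algebra ℚ R]
    (f : PowerSeries R) : PowerSeries R :=
  PowerSeries.mk fun n =>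
    ∑ j ∈ Finset.range (n + 1),
      ((Nat.factorial j : ℚ)⁻¹) • (PowerSeries.coeff (R := R) n (f ^ j))

/-- The `n`-th complete Bell polynomial of `b_1, b_2, …`, defined by
`exp(∑_{i≥1} b_i t^i/i!) = ∑_{r≥0} 𝔹_r t^r/r!`. -/
noncomputable def completeBell {R : Type*} [CommRing R] [Algebra ℚ R]
    (n : ℕ) (b : ℕ → R) : R :=
  (Nat.factorial n : ℚ) •
    PowerSeries.coeff (R := R) n
      (expPS (PowerSeries.mk fun i =>
        if i = 0 then 0 else ((Nat.factorial i : ℚ)⁻¹) • b i))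

/-- The power sum `p_k = ∑_{i=1}^m x_i^k`. -/
noncomputable def psum (m k : ℕ) : MvPolynomial (Fin m) ℚ :=
  ∑ i : Fin m, MvPolynomial.X i ^ k

/-- The Bernoulli polynomial of higher order `B_n(x_1,…,x_m)`, defined by
`∏_{i=1}^m (x_i t)/(e^{x_i t}-1) = ∑_{n≥0} B_n(x^m) t^n/n!`. -/
noncomputable def higherBernoulli (m n : ℕ) : MvPolynomial (Fin m) ℚ :=
  (Nat.factorial n : ℚ) •
    PowerSeries.coeff (R := MvPolynomial (Fin m) ℚ) n
      (∏ i : Fin m, PowerSeries.mk fun k =>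
        (bernoulli k / (Nat.factorial k : ℚ)) • (MvPolynomial.X i ^ k))
/-!
Writing `L(t) = ∑_{r ≥ 1} (-1)^(r-1) B_r t^r / (r · r!)`, one has `t / (e^t - 1) = exp (L t)`:
differentiating `B(t) (e^t - 1) = t` gives `t B' = (1 - t - B) B`, while the sign identity
`(-1)^(r-1) B_r = -B_r` for `r ≥ 2` (odd Bernoulli numbers vanish) gives `t L' = 1 - t - B`.
So `B` and `exp ∘ L` both solve `y' = L' y, y(0) = 1`, and the quotient of two such unit
solutions has derivative zero. Hence
`∏ᵢ x_i t / (e^(x_i t) - 1) = exp (∑ᵢ L (x_i t)) = exp (∑_{r ≥ 1} b_r t^r / r!)`.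
-/

open PowerSeries Nat

theorem constantCoeff_rescale {R : Type*} [CommSemiring R] (a : R) (f : R⟦X⟧) :
    constantCoeff (rescale a f) = constantCoeff f := by
  rw [← coeff_zero_eq_constantCoeff_apply, coeff_rescale, pow_zero, one_mul,
    coeff_zero_eq_constantCoeff_apply]

theorem eq_of_derivative_eq_mul {R : Type*} [CommRing R] [IsAddTorsionFree R] {u f g : R⟦X⟧}
    (hg : IsUnit g) (hf' : d⁄dX R f = u * f) (hg' : d⁄dX R g = u * g)
    (h0 : constantCoeff f = constantCoeff g) : f = g := by
  obtain ⟨v, rfl⟩ := hg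
  rw [← Units.mul_inv_eq_one]
  apply derivative.ext
  · rw [derivative_one, Derivation.leibniz, derivative_inv, hf', hg', smul_eq_mul, smul_eq_mul]
    linear_combination (-(f * ↑v⁻¹ * u)) * v.inv_mul
  · rw [map_mul, h0, ← map_mul, Units.mul_inv, map_one]

section ExpSubst

variable {R : Type*} [CommRing R] [Algebra ℚ R]

theorem expPS_eq_subst_exp {f : R⟦X⟧} (hf : constantCoeff f = 0) :
    expPS f = (exp R).subst f := by
  ext n
  rw [expPS, coeff_mk, coeff_subst' (.of_constantCoeff_zero' hf),
    finsum_eq_sum_of_support_subset (s := Finset.range (n + 1))]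
  · refine Finset.sum_congr rfl fun j _ => ?_
    rw [coeff_exp, algebraMap_smul, one_div]
  · intro j hj
    rw [Finset.coe_range, Set.mem_Iio]
    by_contra! hnj
    refine hj ?_
    dsimp only
    rw [X_pow_dvd_iff.mp (pow_dvd_pow_of_dvd (X_dvd_iff.mpr hf) j) n hnj, smul_zero]

theorem constantCoeff_subst_exp {f : R⟦X⟧} (hf : constantCoeff f = 0) :
    constantCoeff ((exp R).subst f) = 1 := by
  rw [← expPS_eq_subst_exp hf, ← coeff_zero_eq_constantCoeff_apply, expPS, coeff_mk]
  simp

theorem isUnit_subst_exp {f : R⟦X⟧} (hf : constantCoeff f = 0) : IsUnit ((exp R).subst f) := by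
  rw [isUnit_iff_constantCoeff, constantCoeff_subst_exp hf]
  exact isUnit_one

theorem derivative_subst_exp {f : R⟦X⟧} (hf : constantCoeff f = 0) :
    d⁄dX R ((exp R).subst f) = d⁄dX R f * (exp R).subst f := by
  rw [derivative_subst (.of_constantCoeff_zero' hf), derivative_exp, mul_comm]

theorem subst_exp_add {f g : R⟦X⟧} (hf : constantCoeff f = 0) (hg : constantCoeff g = 0) :
    (exp R).subst (f + g) = (exp R).subst f * (exp R).subst g := by
  have : IsAddTorsionFree R := .of_module_rat R
  have hfg : constantCoeff (f + g) = 0 := by rw [map_add, hf, hg, add_zero]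
  refine eq_of_derivative_eq_mul (u := d⁄dX R f + d⁄dX R g)
    ((isUnit_subst_exp hf).mul (isUnit_subst_exp hg)) ?_ ?_ ?_
  · rw [derivative_subst_exp hfg, map_add]
  · rw [Derivation.leibniz, derivative_subst_exp hf, derivative_subst_exp hg, smul_eq_mul,
      smul_eq_mul]
    ring
  · rw [map_mul, constantCoeff_subst_exp hf, constantCoeff_subst_exp hg,
      constantCoeff_subst_exp hfg, mul_one]

theorem subst_exp_sum {ι : Type*} (s : Finset ι) {f : ι → R⟦X⟧}
    (hf : ∀ i ∈ s, constantCoeff (f i) = 0) :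
    (exp R).subst (∑ i ∈ s, f i) = ∏ i ∈ s, (exp R).subst (f i) := by
  induction s using Finset.cons_induction with
  | empty =>
    rw [Finset.sum_empty, Finset.prod_empty, subst_zero_eq_C_constantCoeff, constantCoeff_exp]
    simp
  | cons i s his ih =>
    rw [Finset.forall_mem_cons] at hf
    rw [Finset.sum_cons, Finset.prod_cons, subst_exp_add hf.1
      (by rw [map_sum]; exact Finset.sum_eq_zero hf.2), ih hf.2]

theorem rescale_subst_exp (a : R) {f : R⟦X⟧} (hf : constantCoeff f = 0) :
    rescale a ((exp R).subst f) = (exp R).subst (rescale a f) := by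
  rw [rescale_eq_subst, rescale_eq_subst,
    subst_comp_subst_apply (.of_constantCoeff_zero' hf) (.smul_X' a)]

end ExpSubst

theorem neg_one_pow_pred_mul_bernoulli {k : ℕ} (hk : 2 ≤ k) :
    (-1 : ℚ) ^ (k - 1) * bernoulli k = -bernoulli k := by
  rcases Nat.even_or_odd k with he | ho
  · rw [(Nat.Even.sub_odd (by omega) he odd_one).neg_one_pow, neg_one_mul]
  · rw [bernoulli_eq_zero_of_odd ho (by omega), mul_zero, neg_zero]

section BernoulliLog

variable (A : Type*) [CommRing A] [Algebra ℚ A]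

/-- The logarithm of `bernoulliPowerSeries A`; its constant coefficient vanishes because
`x / 0 = 0`. -/
noncomputable def bernoulliLog : A⟦X⟧ :=
  mk fun r => algebraMap ℚ A ((-1) ^ (r - 1) * bernoulli r / (r * r !))

theorem constantCoeff_bernoulliLog : constantCoeff (bernoulliLog A) = 0 := by
  simp [bernoulliLog, ← coeff_zero_eq_constantCoeff_apply]

theorem X_mul_derivative_bernoulliLog :
    X * d⁄dX A (bernoulliLog A) = 1 - X - bernoulliPowerSeries A := by
  ext (_ | _ | n)
  · simp [bernoulliPowerSeries]
  · have h : algebraMap ℚ A (-1 / 2) = -1 - algebraMap ℚ A (-1 / 2) := by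
      rw [← map_one (algebraMap ℚ A), ← map_neg, ← map_sub]
      norm_num
    simpa [bernoulliLog, bernoulliPowerSeries, coeff_derivative] using h
  · have hn : (n : A) + 1 + 1 = algebraMap ℚ A (n + 2) := by
      rw [map_add, map_natCast, map_ofNat]
      ring
    simp only [coeff_succ_X_mul, coeff_derivative, bernoulliLog, bernoulliPowerSeries, coeff_mk,
      map_sub, coeff_one, coeff_X, add_tsub_cancel_right, Nat.cast_add, Nat.cast_one, hn]
    rw [if_neg (by omega), if_neg (by omega), zero_sub_zero, zero_sub, ← map_mul, ← map_neg]
    congr 1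
    have hb := neg_one_pow_pred_mul_bernoulli (k := n + 1 + 1) le_add_self
    rw [Nat.add_sub_cancel, Nat.factorial_succ] at *
    push_cast
    field_simp
    linear_combination ((n : ℚ) + 2) * hb

theorem derivative_bernoulliPowerSeries :
    d⁄dX A (bernoulliPowerSeries A) = d⁄dX A (bernoulliLog A) * bernoulliPowerSeries A := by
  set B := bernoulliPowerSeries A
  have hB : B * (exp A - 1) = X := bernoulliPowerSeries_mul_exp_sub_one A
  have hB' : B * exp A + (exp A - 1) * d⁄dX A B = 1 := by
    simpa [Derivation.leibniz, derivative_exp, add_comm, mul_comm] using congrArg (d⁄dX A) hB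
  apply X_mul_cancel
  rw [← mul_assoc, X_mul_derivative_bernoulliLog]
  linear_combination B * hB' - (d⁄dX A B + B) * hB

theorem bernoulliPowerSeries_eq_subst_exp :
    bernoulliPowerSeries A = (exp A).subst (bernoulliLog A) := by
  have : IsAddTorsionFree A := .of_module_rat A
  have hL := constantCoeff_bernoulliLog A
  refine eq_of_derivative_eq_mul (isUnit_subst_exp hL) (derivative_bernoulliPowerSeries A)
    (derivative_subst_exp hL) ?_
  rw [constantCoeff_subst_exp hL, ← coeff_zero_eq_constantCoeff_apply]
  simp [bernoulliPowerSeries]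

variable {A} in
theorem rescale_bernoulliPowerSeries (x : A) :
    rescale x (bernoulliPowerSeries A) = mk fun k => (bernoulli k / k !) • x ^ k := by
  ext k
  rw [coeff_rescale, bernoulliPowerSeries, coeff_mk, coeff_mk, Algebra.smul_def, mul_comm]

end BernoulliLog

theorem sum_rescale_X_bernoulliLog (m : ℕ) :
    ∑ i : Fin m, rescale (MvPolynomial.X i) (bernoulliLog (MvPolynomial (Fin m) ℚ)) =
      mk fun r => if r = 0 then 0 else
        (r ! : ℚ)⁻¹ • (((-1 : ℚ) ^ (r - 1) * bernoulli r / r) • psum m r) := by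
  ext r : 1
  rw [map_sum, coeff_mk]
  rcases eq_or_ne r 0 with rfl | hr
  · simp [bernoulliLog]
  · simp only [coeff_rescale, bernoulliLog, coeff_mk, if_neg hr, smul_smul, psum, Finset.smul_sum]
    refine Finset.sum_congr rfl fun i _ => ?_
    rw [Algebra.smul_def, mul_comm]
    congr 2
    field_simp

/-- `B_n(x_1,…,x_m) = 𝔹_n(b_1,b_2,…)` with `b_r = (-1)^{r-1} B_r p_r(x^m)/r`. -/
theorem higherBernoulli_eq_completeBell (m n : ℕ) :
    higherBernoulli m n =
      completeBell n (fun r =>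
        ((-1 : ℚ) ^ (r - 1) * bernoulli r / r) • psum m r) := by
  rw [higherBernoulli, completeBell]
  congr 2
  let P := MvPolynomial (Fin m) ℚ
  let L i := rescale (MvPolynomial.X i) (bernoulliLog P)
  have hL i : constantCoeff (L i) = 0 := by
    rw [constantCoeff_rescale, constantCoeff_bernoulliLog]
  calc _ = ∏ i, (exp P).subst (L i) := by
        refine Finset.prod_congr rfl fun i _ => ?_
        rw [← rescale_bernoulliPowerSeries, bernoulliPowerSeries_eq_subst_exp,
          rescale_subst_exp _ (constantCoeff_bernoulliLog P)]
    _ = (exp P).subst (∑ i, L i) := (subst_exp_sum _ fun i _ => hL i).symm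
    _ = expPS (∑ i, L i) := by
        rw [expPS_eq_subst_exp (by rw [map_sum]; exact Finset.sum_eq_zero fun i _ => hL i)]
    _ = _ := by rw [sum_rescale_X_bernoulliLog]
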